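/- Let q be a prime power and a, b ∈ Z_+. There exist coefficients f_i ∈ F_p and positive integers a_i such that S_1(a)·S_1(b) - S_1(a+b) = ∑_i f_i S_1(a_i), and each a_i can be chosen so that a + b - a_i is divisible by q - 1 (the parity/'even' condition). -/

import Mathlib

/-!
Expanding the product, `S₁(a) S₁(b) - S₁(a+b)` is the off-diagonal sum
`∑_{θ ≠ η} (t+θ)^{-a} (t+η)^{-b}`. Partial fractions along `(t+η) - (t+θ) = η - θ` write
`(η-θ)^{-k} (t+θ)^{-a} (t+η)^{-b}` as a difference of two terms of the same shape with `k` raised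
by one and `a` or `b` lowered by one, so `a + b + k` is invariant. Once `a` or `b` reaches `0`,
the sum over the other root is `∑_{c ∈ F^×} c^{-k}`, which is `-1` if `q - 1 ∣ k` and `0`
otherwise; hence only `S₁(A)` with `A ≡ a + b (mod q - 1)` survive, with integer coefficients.
-/

open Finset

theorem sum_sum_erase_comm {ι M : Type*} [Fintype ι] [DecidableEq ι] [AddCommGroup M]
    (f : ι → ι → M) : ∑ i, ∑ j ∈ univ.erase i, f i j = ∑ j, ∑ i ∈ univ.erase j, f i j := by
  simp only [sum_erase_eq_sub (mem_univ _), sum_sub_distrib]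
  rw [sum_comm]

section
variable {F : Type*} [Field F] [Fintype F] [DecidableEq F]

theorem sum_erase_zero_inv_pow (k : ℕ) :
    ∑ c ∈ univ.erase (0 : F), (c ^ k)⁻¹ = if Fintype.card F - 1 ∣ k then -1 else 0 := by
  rw [← FiniteField.sum_pow_units F k]
  refine sum_bij' (fun c hc => (Units.mk0 c (ne_of_mem_erase hc))⁻¹) (fun u _ => (u⁻¹ : Fˣ))
    (fun _ _ => mem_univ _) (fun u _ => mem_erase.2 ⟨u⁻¹.ne_zero, mem_univ _⟩)
    (fun _ _ => by simp) (fun _ _ => Units.ext (by simp)) (fun _ _ => by simp)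

variable {M : Type*} [AddCommGroup M]

theorem sum_erase_comp_sub_const (g : F → M) (x : F) :
    ∑ y ∈ univ.erase x, g (y - x) = ∑ c ∈ univ.erase 0, g c := by
  rw [sum_erase_eq_sub (mem_univ x), sum_erase_eq_sub (mem_univ 0), sub_self]
  exact congrArg (· - g 0) ((Equiv.subRight x).sum_comp g)

theorem sum_erase_comp_const_sub (g : F → M) (x : F) :
    ∑ y ∈ univ.erase x, g (x - y) = ∑ c ∈ univ.erase 0, g c := by
  rw [sum_erase_eq_sub (mem_univ x), sum_erase_eq_sub (mem_univ 0), sub_self]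
  exact congrArg (· - g 0) ((Equiv.subLeft x).sum_comp g)

end

theorem inv_mul_inv_pow_eq_sub {K : Type*} [Field K] {u v : K} (hu : u ≠ 0) (hv : v ≠ 0)
    (huv : v - u ≠ 0) (k a b : ℕ) :
    ((v - u) ^ k)⁻¹ * (u ^ (a + 1) * v ^ (b + 1))⁻¹ =
      ((v - u) ^ (k + 1))⁻¹ * ((u ^ (a + 1) * v ^ b)⁻¹ - (u ^ a * v ^ (b + 1))⁻¹) := by
  field_simp
  ring

noncomputable section

open RatFunc

theorem RatFunc.X_add_C_ne_zero {K : Type*} [Field K] (θ : K) : (X + C θ : RatFunc K) ≠ 0 := by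
  rw [← algebraMap_X, ← algebraMap_C, ← map_add]
  exact algebraMap_ne_zero (Polynomial.X_add_C_ne_zero θ)

variable (F : Type*) [Field F] [Fintype F]

def S₁ (k : ℕ) : RatFunc F := ∑ θ : F, ((X + C θ) ^ k)⁻¹

/-- `ℤ`-combinations: the image of `ℤ` in `F` is the prime field, so these are the
`𝔽_p`-combinations of the paper. -/
def evenSpan (n : ℕ) : Submodule ℤ (RatFunc F) :=
  Submodule.span ℤ (S₁ F '' {A | 1 ≤ A ∧ ((Fintype.card F : ℤ) - 1) ∣ (n : ℤ) - A})

def offDiagSum [DecidableEq F] (k a b : ℕ) : RatFunc F :=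
  ∑ θ : F, ∑ η ∈ univ.erase θ, (C (η - θ) ^ k)⁻¹ * ((X + C θ) ^ a * (X + C η) ^ b)⁻¹

variable {F}

theorem S₁_zero : S₁ F 0 = 0 := by
  simp [S₁, ← map_natCast (algebraMap F (RatFunc F))]

theorem S₁_mem_evenSpan {n A : ℕ} (h : ((Fintype.card F : ℤ) - 1) ∣ (n : ℤ) - A) :
    S₁ F A ∈ evenSpan F n := by
  rcases Nat.eq_zero_or_pos A with rfl | hA
  · rw [S₁_zero]
    exact zero_mem _
  · exact Submodule.subset_span ⟨A, ⟨hA, h⟩, rfl⟩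

theorem ite_neg_S₁_mem_evenSpan (a k : ℕ) :
    (if Fintype.card F - 1 ∣ k then -S₁ F a else 0) ∈ evenSpan F (a + k) := by
  split_ifs with hk
  · refine neg_mem (S₁_mem_evenSpan ?_)
    have : 1 ≤ Fintype.card F := Fintype.card_pos
    simpa [Nat.cast_sub this] using Int.natCast_dvd_natCast.2 hk
  · exact zero_mem _

theorem exists_zmod_combination_of_mem_evenSpan (p : ℕ) [CharP F p] {n : ℕ} {x : RatFunc F}
    (hx : x ∈ evenSpan F n) :
    ∃ (m : ℕ) (f : Fin m → ZMod p) (A : Fin m → ℕ), (∀ i, 1 ≤ A i) ∧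
      (∀ i, ((Fintype.card F : ℤ) - 1) ∣ (n : ℤ) - A i) ∧
      x = ∑ i, algebraMap F (RatFunc F) (ZMod.castHom (dvd_refl p) F (f i)) * S₁ F (A i) := by
  obtain ⟨m, c, g, rfl⟩ := Submodule.mem_span_set'.1 hx
  choose A hA hgA using fun i => (g i).2
  refine ⟨m, fun i => c i, A, fun i => (hA i).1, fun i => (hA i).2,
    sum_congr rfl fun i _ => ?_⟩
  rw [hgA i, map_intCast, map_intCast, zsmul_eq_mul]

variable [DecidableEq F]

theorem sum_erase_inv_C_sub_const_pow (θ : F) (k : ℕ) :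
    ∑ η ∈ univ.erase θ, (C (η - θ) ^ k)⁻¹ = C (if Fintype.card F - 1 ∣ k then -1 else 0) := by
  rw [← sum_erase_zero_inv_pow, map_sum]
  simp only [map_inv₀, map_pow]
  exact sum_erase_comp_sub_const (fun c => (C c ^ k)⁻¹) θ

theorem sum_erase_inv_C_const_sub_pow (η : F) (k : ℕ) :
    ∑ θ ∈ univ.erase η, (C (η - θ) ^ k)⁻¹ = C (if Fintype.card F - 1 ∣ k then -1 else 0) := by
  rw [← sum_erase_zero_inv_pow, map_sum]
  simp only [map_inv₀, map_pow]
  exact sum_erase_comp_const_sub (fun c => (C c ^ k)⁻¹) η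

theorem offDiagSum_zero_right (k a : ℕ) :
    offDiagSum F k a 0 = if Fintype.card F - 1 ∣ k then -S₁ F a else 0 := by
  simp only [offDiagSum, pow_zero, mul_one, ← sum_mul, sum_erase_inv_C_sub_const_pow]
  split_ifs <;> simp [S₁]

theorem offDiagSum_zero_left (k b : ℕ) :
    offDiagSum F k 0 b = if Fintype.card F - 1 ∣ k then -S₁ F b else 0 := by
  simp only [offDiagSum, pow_zero, one_mul]
  rw [sum_sum_erase_comm]
  simp only [← sum_mul, sum_erase_inv_C_const_sub_pow]
  split_ifs <;> simp [S₁]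

theorem offDiagSum_succ_succ (k a b : ℕ) :
    offDiagSum F k (a + 1) (b + 1) =
      offDiagSum F (k + 1) (a + 1) b - offDiagSum F (k + 1) a (b + 1) := by
  simp only [offDiagSum, ← sum_sub_distrib, ← mul_sub]
  refine sum_congr rfl fun θ _ => sum_congr rfl fun η hη => ?_
  have hsub : (X + C η) - (X + C θ) = C (η - θ) := by rw [map_sub]; ring
  have hC : C (η - θ) ≠ 0 := (map_ne_zero C).2 (sub_ne_zero.2 (ne_of_mem_erase hη))
  have h := inv_mul_inv_pow_eq_sub (X_add_C_ne_zero θ) (X_add_C_ne_zero η) (hsub ▸ hC) k a b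
  rwa [hsub] at h

theorem offDiagSum_mem_evenSpan (k a b : ℕ) : offDiagSum F k a b ∈ evenSpan F (a + b + k) := by
  induction a generalizing b k with
  | zero => simpa [offDiagSum_zero_left] using ite_neg_S₁_mem_evenSpan b k
  | succ a iha =>
    induction b generalizing k with
    | zero => simpa [offDiagSum_zero_right] using ite_neg_S₁_mem_evenSpan (a + 1) k
    | succ b ihb =>
      rw [offDiagSum_succ_succ]
      have hn : a + 1 + (b + 1) + k = a + 1 + b + (k + 1) := by ring
      have hn' : a + 1 + (b + 1) + k = a + (b + 1) + (k + 1) := by ring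
      exact sub_mem (hn ▸ ihb (k + 1)) (hn' ▸ iha (k + 1) (b + 1))

theorem S₁_mul_S₁ (a b : ℕ) : S₁ F a * S₁ F b = offDiagSum F 0 a b + S₁ F (a + b) := by
  simp only [S₁, offDiagSum, sum_mul_sum, pow_zero, inv_one, one_mul, ← sum_add_distrib]
  refine sum_congr rfl fun θ _ => ?_
  rw [← add_sum_erase _ _ (mem_univ θ), add_comm, pow_add, mul_inv]
  simp only [mul_inv]

end

theorem stmt_7_general (p q : ℕ)
    {F : Type} [Field F] [Fintype F] [CharP F p] (hF : Fintype.card F = q)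
    (a b : ℕ) :
    ∃ (m : ℕ) (f : Fin m → ZMod p) (A : Fin m → ℕ),
      (∀ i, 1 ≤ A i) ∧
      (∀ i, ((q : ℤ) - 1) ∣ ((a : ℤ) + b - A i)) ∧
      (∑ θ : F, ((RatFunc.X + RatFunc.C θ) ^ a)⁻¹) *
          (∑ θ : F, ((RatFunc.X + RatFunc.C θ) ^ b)⁻¹) -
          (∑ θ : F, ((RatFunc.X + RatFunc.C θ) ^ (a + b))⁻¹) =
        ∑ i : Fin m,
          algebraMap F (RatFunc F) (ZMod.castHom (dvd_refl p) F (f i)) *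
            (∑ θ : F, ((RatFunc.X + RatFunc.C θ) ^ (A i))⁻¹) := by
  classical
  obtain ⟨m, f, A, hA, hAeven, hsum⟩ :=
    exists_zmod_combination_of_mem_evenSpan p (offDiagSum_mem_evenSpan (F := F) 0 a b)
  refine ⟨m, f, A, hA, fun i => by simpa [hF] using hAeven i, ?_⟩
  change S₁ F a * S₁ F b - S₁ F (a + b) = ∑ i, _ * S₁ F (A i)
  rw [S₁_mul_S₁, add_sub_cancel_right, hsum]

/-- There exist `f_i ∈ F_p` and `a_i ∈ ℤ_+` with
`S_1(a)S_1(b) - S_1(a+b) = ∑ f_i S_1(a_i)` and each `a + b - a_i` divisible by `q-1`. -/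
theorem stmt_7 (p s q : ℕ) (hp : p.Prime) (hs : 0 < s) (hq : q = p ^ s)
    {F : Type} [Field F] [Fintype F] [CharP F p] (hF : Fintype.card F = q)
    (a b : ℕ) (ha : 1 ≤ a) (hb : 1 ≤ b) :
    ∃ (m : ℕ) (f : Fin m → ZMod p) (A : Fin m → ℕ),
      (∀ i, 1 ≤ A i) ∧
      (∀ i, ((q : ℤ) - 1) ∣ ((a : ℤ) + b - A i)) ∧
      (∑ θ : F, ((RatFunc.X + RatFunc.C θ) ^ a)⁻¹) *
          (∑ θ : F, ((RatFunc.X + RatFunc.C θ) ^ b)⁻¹) -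
          (∑ θ : F, ((RatFunc.X + RatFunc.C θ) ^ (a + b))⁻¹) =
        ∑ i : Fin m,
          algebraMap F (RatFunc F) (ZMod.castHom (dvd_refl p) F (f i)) *
            (∑ θ : F, ((RatFunc.X + RatFunc.C θ) ^ (A i))⁻¹) :=
  stmt_7_general p q hF a b
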